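/- arXiv:0804.1660 — 4 statements merged into one kernel-verified Lean document; each statement's English description precedes it below -/
import Mathlib

section
/- For real numbers 0 < r < s and u, v > 0, the integral ∫₀^∞ x^(r-1)/(u x + v)^s dx equals (1/(u^r v^(s-r))) · Γ(r)Γ(s-r)/Γ(s). -/
/-!
Substituting `x = (v / u) y` reduces the integral to the case `u = v = 1`, and the substitution
`y = t / (1 - t)` turns `∫₀^∞ y^(r-1) / (1 + y)^s dy` into Euler's beta integral
`∫₀¹ t^(r-1) (1 - t)^(s-r-1) dt = Γ(r) Γ(s - r) / Γ(s)`.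
-/

open MeasureTheory Real Set

theorem integral_rpow_mul_one_sub_rpow {a b : ℝ} (ha : 0 < a) (hb : 0 < b) :
    ∫ x in (0:ℝ)..1, x ^ (a - 1) * (1 - x) ^ (b - 1) = Gamma a * Gamma b / Gamma (a + b) := by
  apply Complex.ofReal_injective
  push_cast [← Complex.Gamma_ofReal]
  rw [← Complex.betaIntegral_eq_Gamma_mul_div a b (by simpa) (by simpa), Complex.betaIntegral,
    ← intervalIntegral.integral_ofReal]
  refine intervalIntegral.integral_congr fun x hx => ?_
  rw [uIcc_of_le zero_le_one] at hx
  push_cast [Complex.ofReal_cpow hx.1, Complex.ofReal_cpow (sub_nonneg.2 hx.2)]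
  rfl

theorem image_div_one_sub_Ioo : (fun t : ℝ => t / (1 - t)) '' Ioo 0 1 = Ioi 0 := by
  ext y
  constructor
  · rintro ⟨t, ⟨ht0, ht1⟩, rfl⟩
    exact div_pos ht0 (sub_pos.2 ht1)
  · intro (hy : 0 < y)
    refine ⟨y / (1 + y), ⟨by positivity, (div_lt_one (by positivity)).2 (by linarith)⟩, ?_⟩
    field_simp
    ring

theorem strictMonoOn_div_one_sub : StrictMonoOn (fun t : ℝ => t / (1 - t)) (Ioo 0 1) := by
  intro t ht t' ht' h
  simp only
  rw [div_lt_div_iff₀ (sub_pos.2 ht.2) (sub_pos.2 ht'.2)]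
  nlinarith

theorem integral_Ioi_eq_integral_Ioo_div_one_sub (f : ℝ → ℝ) :
    ∫ y in Ioi (0:ℝ), f y = ∫ t in Ioo (0:ℝ) 1, ((1 - t) ^ 2)⁻¹ * f (t / (1 - t)) := by
  have hderiv : ∀ t ∈ Ioo (0:ℝ) 1,
      HasDerivWithinAt (fun t => t / (1 - t)) ((1 - t) ^ 2)⁻¹ (Ioo 0 1) t := by
    intro t ht
    have := (hasDerivAt_id t).div ((hasDerivAt_const t 1).sub (hasDerivAt_id t))
      (sub_pos.2 ht.2).ne'
    exact this.hasDerivWithinAt.congr_deriv (by simp)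
  rw [← image_div_one_sub_Ioo, integral_image_eq_integral_abs_deriv_smul measurableSet_Ioo hderiv
    strictMonoOn_div_one_sub.injOn]
  simp only [smul_eq_mul, abs_inv, abs_pow, sq_abs]

theorem rpow_div_one_add_rpow_comp_div_one_sub {a b t : ℝ} (ht : t ∈ Ioo (0:ℝ) 1) :
    ((1 - t) ^ 2)⁻¹ * ((t / (1 - t)) ^ (a - 1) / (1 + t / (1 - t)) ^ (a + b)) =
      t ^ (a - 1) * (1 - t) ^ (b - 1) := by
  have hw : 0 < 1 - t := sub_pos.2 ht.2
  have hsum : 1 + t / (1 - t) = (1 - t)⁻¹ := by field_simp; ring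
  have hsplit : (1 - t) ^ (a + b) = (1 - t) ^ (b - 1) * (1 - t) ^ (a - 1) * (1 - t) ^ 2 := by
    rw [← rpow_add hw, ← rpow_natCast, ← rpow_add hw]
    ring_nf
  rw [hsum, inv_rpow hw.le, div_rpow ht.1.le hw.le, hsplit]
  field_simp

theorem integral_Ioi_rpow_div_one_add_rpow {a s : ℝ} (ha : 0 < a) (has : a < s) :
    ∫ y in Ioi (0:ℝ), y ^ (a - 1) / (1 + y) ^ s = Gamma a * Gamma (s - a) / Gamma s := by
  obtain ⟨b, hb, rfl⟩ : ∃ b, 0 < b ∧ s = a + b := ⟨s - a, sub_pos.2 has, by ring⟩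
  rw [integral_Ioi_eq_integral_Ioo_div_one_sub, setIntegral_congr_fun measurableSet_Ioo
    fun t ht => rpow_div_one_add_rpow_comp_div_one_sub ht, ← integral_Ioc_eq_integral_Ioo,
    ← intervalIntegral.integral_of_le zero_le_one, add_sub_cancel_left]
  exact integral_rpow_mul_one_sub_rpow ha hb

theorem rpow_div_mul_add_rpow_comp_mul_div {r s u v y : ℝ} (hu : 0 < u) (hv : 0 < v)
    (hy : 0 < y) :
    (v / u * y) ^ (r - 1) / (u * (v / u * y) + v) ^ s =
      (v / u) ^ (r - 1) / v ^ s * (y ^ (r - 1) / (1 + y) ^ s) := by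
  have hsum : u * (v / u * y) + v = v * (1 + y) := by field_simp; ring
  rw [hsum, mul_rpow (by positivity) hy.le, mul_rpow hv.le (by positivity)]
  ring

/-- Euler beta-type integral: for `0 < r < s` and `u, v > 0`,
`∫₀^∞ x^(r-1)/(u x + v)^s dx = (1/(u^r v^(s-r))) · Γ(r)Γ(s-r)/Γ(s)`. -/
theorem beta_integral (r s u v : ℝ) (hr : 0 < r) (hrs : r < s)
    (hu : 0 < u) (hv : 0 < v) :
    ∫ x in Set.Ioi (0 : ℝ), x ^ (r - 1) / (u * x + v) ^ s =
      (1 / (u ^ r * v ^ (s - r))) * (Gamma r * Gamma (s - r) / Gamma s) := by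
  have hc : 0 < v / u := div_pos hv hu
  have hconst : v / u * ((v / u) ^ (r - 1) / v ^ s) = 1 / (u ^ r * v ^ (s - r)) := by
    rw [← mul_div_assoc, ← rpow_one_add' hc.le (by linarith), add_sub_cancel,
      div_rpow hv.le hu.le, rpow_sub hv]
    field_simp
  calc ∫ x in Ioi 0, x ^ (r - 1) / (u * x + v) ^ s
      = v / u * ∫ y in Ioi 0, (v / u * y) ^ (r - 1) / (u * (v / u * y) + v) ^ s := by
        rw [← smul_eq_mul,
          integral_comp_mul_left_Ioi' (fun x => x ^ (r - 1) / (u * x + v) ^ s) 0 hc, mul_zero]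
    _ = v / u * ((v / u) ^ (r - 1) / v ^ s) * ∫ y in Ioi 0, y ^ (r - 1) / (1 + y) ^ s := by
        rw [setIntegral_congr_fun measurableSet_Ioi fun y hy =>
          rpow_div_mul_add_rpow_comp_mul_div hu hv hy, integral_const_mul, mul_assoc]
    _ = _ := by rw [hconst, integral_Ioi_rpow_div_one_add_rpow hr hrs]
end

section
/- For real numbers p, q, r, s > 0 with ps ≠ qr, the integral ∫₀^∞ log(px + q)/(rx + s)² dx equals p(log p + log s − log q − log r)/(r(ps − qr)) + log(q)/(rs). -/
/-!
The function
`F x = -log (p x + q) / (r (r x + s)) + p / (r (p s - q r)) * (log (p x + q) - log (r x + s))`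
is a primitive of the integrand on `[0, ∞)`, and it tends to `p (log p - log r) / (r (p s - q r))`
at infinity. The integrand is nonnegative as soon as `p x + q ≥ 1`, so the same primitive also
gives integrability on the tail, and the integral is `F (∞) - F 0`.
-/

open MeasureTheory Real Filter Set Topology

theorem integrableOn_Ioi_deriv_of_eventually_nonneg {f f' : ℝ → ℝ} {a l : ℝ}
    (hderiv : ∀ x ∈ Ici a, HasDerivAt f (f' x) x) (hcont : ContinuousOn f' (Ici a))
    (hnonneg : ∀ᶠ x in atTop, 0 ≤ f' x) (hf : Tendsto f atTop (𝓝 l)) :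
    IntegrableOn f' (Ioi a) := by
  obtain ⟨b, hb⟩ := eventually_atTop.mp hnonneg
  set c := max a b
  have hac : a ≤ c := le_max_left a b
  have hhead : IntegrableOn f' (Ioc a c) :=
    ((hcont.mono Icc_subset_Ici_self).integrableOn_Icc).mono_set Ioc_subset_Icc_self
  have htail : IntegrableOn f' (Ioi c) :=
    integrableOn_Ioi_deriv_of_nonneg (hderiv c hac).continuousAt.continuousWithinAt
      (fun x hx => hderiv x (hac.trans (le_of_lt hx)))
      (fun x hx => hb x ((le_max_right a b).trans (le_of_lt hx))) hf
  rw [← Ioc_union_Ioi_eq_Ioi hac]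
  exact hhead.union htail

theorem tendsto_affine_div_affine_atTop (p q s : ℝ) {r : ℝ} (hr : r ≠ 0) :
    Tendsto (fun x => (p * x + q) / (r * x + s)) atTop (𝓝 (p / r)) := by
  have hlim : Tendsto (fun x : ℝ => (p + q * x⁻¹) / (r + s * x⁻¹)) atTop
      (𝓝 ((p + q * 0) / (r + s * 0))) :=
    (tendsto_const_nhds.add (tendsto_inv_atTop_zero.const_mul q)).div
      (tendsto_const_nhds.add (tendsto_inv_atTop_zero.const_mul s)) (by simpa using hr)
  rw [mul_zero, mul_zero, add_zero, add_zero] at hlim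
  refine hlim.congr' ?_
  filter_upwards [eventually_gt_atTop 0] with x hx
  rw [← mul_div_mul_right _ _ hx.ne']
  field_simp

section LogDivSq

variable {p q r s : ℝ}

noncomputable def logDivSqPrimitive (p q r s x : ℝ) : ℝ :=
  -(log (p * x + q) / (r * (r * x + s))) +
    p / (r * (p * s - q * r)) * (log (p * x + q) - log (r * x + s))

theorem hasDerivAt_logDivSqPrimitive (hr : r ≠ 0) (h : p * s ≠ q * r) {x : ℝ}
    (hpx : p * x + q ≠ 0) (hrx : r * x + s ≠ 0) :
    HasDerivAt (logDivSqPrimitive p q r s) (log (p * x + q) / (r * x + s) ^ 2) x := by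
  have hpx' : HasDerivAt (fun x => p * x + q) p x := by
    simpa using ((hasDerivAt_id x).const_mul p).add_const q
  have hrx' : HasDerivAt (fun x => r * x + s) r x := by
    simpa using ((hasDerivAt_id x).const_mul r).add_const s
  have hF := ((hpx'.log hpx).div (hrx'.const_mul r) (mul_ne_zero hr hrx)).neg.add
    (((hpx'.log hpx).sub (hrx'.log hrx)).const_mul (p / (r * (p * s - q * r))))
  refine hF.congr_deriv ?_
  rw [div_sub_div _ _ hpx hrx]
  field_simp
  ring

theorem tendsto_logDivSqPrimitive_atTop (hp : 0 < p) (hr : 0 < r) :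
    Tendsto (logDivSqPrimitive p q r s) atTop
      (𝓝 (p / (r * (p * s - q * r)) * (log p - log r))) := by
  have hpx : Tendsto (fun x => p * x + q) atTop atTop :=
    tendsto_atTop_add_const_right _ q (tendsto_id.const_mul_atTop hp)
  have hrx : Tendsto (fun x => r * x + s) atTop atTop :=
    tendsto_atTop_add_const_right _ s (tendsto_id.const_mul_atTop hr)
  have hratio := tendsto_affine_div_affine_atTop p q s hr.ne'
  have hlogDiv : Tendsto (fun x => log (p * x + q) / (p * x + q)) atTop (𝓝 0) :=
    isLittleO_log_id_atTop.tendsto_div_nhds_zero.comp hpx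
  have hfirst : Tendsto (fun x => log (p * x + q) / (r * (r * x + s))) atTop (𝓝 0) := by
    have hlim := (hlogDiv.mul hratio).div_const r
    rw [zero_mul, zero_div] at hlim
    refine hlim.congr' ?_
    filter_upwards [hpx.eventually_gt_atTop 0, hrx.eventually_gt_atTop 0] with x hx hx'
    field_simp
  have hsecond : Tendsto (fun x => log (p * x + q) - log (r * x + s)) atTop
      (𝓝 (log p - log r)) := by
    rw [← log_div hp.ne' hr.ne']
    refine ((continuousAt_log (div_pos hp hr).ne').tendsto.comp hratio).congr' ?_
    filter_upwards [hpx.eventually_gt_atTop 0, hrx.eventually_gt_atTop 0] with x hx hx'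
    exact log_div hx.ne' hx'.ne'
  have hlim := hfirst.neg.add (hsecond.const_mul (p / (r * (p * s - q * r))))
  rwa [neg_zero, zero_add] at hlim

theorem hasDerivAt_logDivSqPrimitive_of_nonneg (hp : 0 < p) (hq : 0 < q) (hr : 0 < r)
    (hs : 0 < s) (h : p * s ≠ q * r) {x : ℝ} (hx : 0 ≤ x) :
    HasDerivAt (logDivSqPrimitive p q r s) (log (p * x + q) / (r * x + s) ^ 2) x :=
  hasDerivAt_logDivSqPrimitive hr.ne' h (by positivity) (by positivity)

theorem integrableOn_Ioi_log_div_sq (hp : 0 < p) (hq : 0 < q) (hr : 0 < r) (hs : 0 < s)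
    (h : p * s ≠ q * r) :
    IntegrableOn (fun x => log (p * x + q) / (r * x + s) ^ 2) (Ioi 0) := by
  refine integrableOn_Ioi_deriv_of_eventually_nonneg
    (fun _ hx => hasDerivAt_logDivSqPrimitive_of_nonneg hp hq hr hs h hx) ?_ ?_
    (tendsto_logDivSqPrimitive_atTop hp hr)
  · exact (ContinuousOn.log (by fun_prop) fun x (hx : 0 ≤ x) => by positivity).div (by fun_prop)
      fun x (hx : 0 ≤ x) => by positivity
  · filter_upwards [eventually_ge_atTop p⁻¹] with x hx
    have : 1 ≤ p * x := by rwa [← inv_mul_le_iff₀ hp, mul_one]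
    exact div_nonneg (log_nonneg (by linarith)) (sq_nonneg _)

end LogDivSq

/-- For `p, q, r, s > 0` with `ps ≠ qr`,
`∫₀^∞ log(px+q)/(rx+s)² dx = p(log p + log s − log q − log r)/(r(ps−qr)) + log q/(rs)`. -/
theorem log_over_square_integral (p q r s : ℝ) (hp : 0 < p) (hq : 0 < q)
    (hr : 0 < r) (hs : 0 < s) (h : p * s ≠ q * r) :
    ∫ x in Set.Ioi (0 : ℝ), Real.log (p * x + q) / (r * x + s) ^ 2 =
      p * (Real.log p + Real.log s - Real.log q - Real.log r) / (r * (p * s - q * r)) +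
        Real.log q / (r * s) := by
  rw [integral_Ioi_of_hasDerivAt_of_tendsto'
    (fun _ hx => hasDerivAt_logDivSqPrimitive_of_nonneg hp hq hr hs h hx)
    (integrableOn_Ioi_log_div_sq hp hq hr hs h) (tendsto_logDivSqPrimitive_atTop hp hr)]
  simp only [logDivSqPrimitive, mul_zero, zero_add]
  ring
end

section
/- The multiple zeta value ζ(1,2) = ∑_{0 < k₁ < k₂} 1/(k₁ k₂²) equals ζ(3) = ∑_{k ≥ 1} 1/k³. -/
open Finset Filter

noncomputable def Fzisa (p : ℕ × ℕ) : ℝ :=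
  1 / (((p.1 : ℝ) + 1) * ((p.2 : ℝ) + 1) * ((p.1 : ℝ) + (p.2 : ℝ) + 2))

noncomputable def Gzisa (p : ℕ × ℕ) : ℝ :=
  1 / (((p.1 : ℝ) + 1) * ((p.1 : ℝ) + (p.2 : ℝ) + 2) ^ 2)

noncomputable def Wzisa (p : ℕ × ℕ) : ℝ :=
  if p.1 < p.2 then 1 / (((p.1 : ℝ) + 1) * ((p.2 : ℝ) + 1) ^ 2) else 0

lemma summable_rpow32 : Summable (fun n : ℕ => 1 / ((n : ℝ) + 1) ^ (3/2 : ℝ)) := by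
  have h := (summable_nat_add_iff 1).mpr
    (Real.summable_one_div_nat_rpow.mpr (by norm_num : (1:ℝ) < 3/2))
  refine h.congr fun n => ?_
  push_cast
  ring_nf

lemma bound_summable : Summable (fun p : ℕ × ℕ =>
    (1 / ((p.1 : ℝ) + 1) ^ (3/2 : ℝ)) * (1 / ((p.2 : ℝ) + 1) ^ (3/2 : ℝ))) := by
  apply summable_rpow32.mul_of_nonneg summable_rpow32 <;>
    exact fun n => by positivity

lemma rpow_prod_le {a b c : ℝ} (ha : 1 ≤ a) (hb : 1 ≤ b) (hc : Real.sqrt (a * b) ≤ c) :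
    1 / (a * b * c) ≤ (1 / a ^ (3/2 : ℝ)) * (1 / b ^ (3/2 : ℝ)) := by
  have ha0 : (0:ℝ) < a := lt_of_lt_of_le one_pos ha
  have hb0 : (0:ℝ) < b := lt_of_lt_of_le one_pos hb
  have hs : (0:ℝ) < Real.sqrt (a * b) := Real.sqrt_pos.mpr (by positivity)
  have h1 : a ^ (3/2 : ℝ) * b ^ (3/2 : ℝ) = a * b * Real.sqrt (a * b) := by
    rw [← Real.mul_rpow ha0.le hb0.le, show (3/2 : ℝ) = 1 + 1/2 by norm_num,
      Real.rpow_add (by positivity), Real.rpow_one, ← Real.sqrt_eq_rpow]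
  rw [div_mul_div_comm, one_mul, h1]
  apply one_div_le_one_div_of_le (by positivity)
  exact mul_le_mul_of_nonneg_left hc (by positivity)

lemma sqrt_mul_le_add {a b : ℝ} (ha : 0 ≤ a) (hb : 0 ≤ b) : Real.sqrt (a * b) ≤ a + b :=
  calc Real.sqrt (a * b) ≤ Real.sqrt ((a + b) ^ 2) := Real.sqrt_le_sqrt (by nlinarith)
    _ = a + b := Real.sqrt_sq (by positivity)

lemma sqrt_mul_le_right {a b : ℝ} (ha : 0 ≤ a) (hab : a ≤ b) : Real.sqrt (a * b) ≤ b :=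
  calc Real.sqrt (a * b) ≤ Real.sqrt (b * b) :=
      Real.sqrt_le_sqrt (mul_le_mul_of_nonneg_right hab (ha.trans hab))
    _ = b := Real.sqrt_mul_self (ha.trans hab)

lemma summable_F : Summable Fzisa := by
  refine Summable.of_nonneg_of_le (fun p => by unfold Fzisa; positivity) (fun p => ?_) bound_summable
  unfold Fzisa
  have h := rpow_prod_le (a := (p.1:ℝ)+1) (b := (p.2:ℝ)+1)
    (by have := Nat.cast_nonneg (α := ℝ) p.1; linarith)
    (by have := Nat.cast_nonneg (α := ℝ) p.2; linarith)
    (sqrt_mul_le_add (by positivity) (by positivity))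
  calc 1 / (((p.1:ℝ)+1) * ((p.2:ℝ)+1) * ((p.1:ℝ) + (p.2:ℝ) + 2))
      = 1 / (((p.1:ℝ)+1) * ((p.2:ℝ)+1) * (((p.1:ℝ)+1) + ((p.2:ℝ)+1))) := by ring_nf
    _ ≤ _ := h

lemma summable_G : Summable Gzisa := by
  refine Summable.of_nonneg_of_le (fun p => by unfold Gzisa; positivity)
    (fun p => ?_) summable_F
  unfold Gzisa Fzisa
  have h1 : (0:ℝ) ≤ p.1 := Nat.cast_nonneg _
  have h2 : (0:ℝ) ≤ p.2 := Nat.cast_nonneg _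
  apply one_div_le_one_div_of_le (by positivity)
  have h3 : ((p.2:ℝ)+1) ≤ (p.1:ℝ)+(p.2:ℝ)+2 := by linarith
  nlinarith [mul_le_mul_of_nonneg_left
    (mul_le_mul_of_nonneg_right h3 (by positivity : (0:ℝ) ≤ (p.1:ℝ)+(p.2:ℝ)+2))
    (by positivity : (0:ℝ) ≤ (p.1:ℝ)+1)]

lemma summable_W : Summable Wzisa := by
  refine Summable.of_nonneg_of_le (fun p => ?_) (fun p => ?_) bound_summable
  · unfold Wzisa; split <;> positivity
  · unfold Wzisa
    have h1 : (0:ℝ) ≤ p.1 := Nat.cast_nonneg _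
    have h2 : (0:ℝ) ≤ p.2 := Nat.cast_nonneg _
    split
    · rename_i h
      have hab : (p.1:ℝ) + 1 ≤ (p.2:ℝ) + 1 := by
        have : (p.1:ℝ) ≤ p.2 := Nat.cast_le.mpr h.le
        linarith
      have := rpow_prod_le (a := (p.1:ℝ)+1) (b := (p.2:ℝ)+1)
        (by linarith) (by linarith) (sqrt_mul_le_right (by positivity) hab)
      calc 1 / (((p.1:ℝ)+1) * ((p.2:ℝ)+1) ^ 2)
          = 1 / (((p.1:ℝ)+1) * ((p.2:ℝ)+1) * ((p.2:ℝ)+1)) := by ring_nf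
        _ ≤ _ := this
    · positivity

lemma tendsto_aux (c : ℝ) : Tendsto (fun n : ℕ => 1 / ((n : ℝ) + c)) atTop (nhds 0) := by
  simp only [one_div]
  exact (tendsto_atTop_add_const_right atTop c tendsto_natCast_atTop_atTop).inv_tendsto_atTop

lemma tele (i : ℕ) :
    HasSum (fun k : ℕ => 1 / ((k : ℝ) + (i : ℝ) + 1) - 1 / ((k : ℝ) + (i : ℝ) + 2))
      (1 / ((i : ℝ) + 1)) := by
  have hnn : ∀ k : ℕ, 0 ≤ 1 / ((k : ℝ) + (i : ℝ) + 1) - 1 / ((k : ℝ) + (i : ℝ) + 2) := by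
    intro k
    have : 1 / ((k : ℝ) + (i : ℝ) + 2) ≤ 1 / ((k : ℝ) + (i : ℝ) + 1) :=
      one_div_le_one_div_of_le (by positivity) (by linarith)
    linarith
  rw [hasSum_iff_tendsto_nat_of_nonneg hnn]
  have hps : ∀ n : ℕ, ∑ k ∈ range n,
      (1 / ((k : ℝ) + (i : ℝ) + 1) - 1 / ((k : ℝ) + (i : ℝ) + 2))
      = 1 / ((i : ℝ) + 1) - 1 / ((n : ℝ) + (i : ℝ) + 1) := by
    intro n
    calc ∑ k ∈ range n, (1 / ((k : ℝ) + (i : ℝ) + 1) - 1 / ((k : ℝ) + (i : ℝ) + 2))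
        = ∑ k ∈ range n, ((fun k : ℕ => 1 / ((k : ℝ) + (i : ℝ) + 1)) k
            - (fun k : ℕ => 1 / ((k : ℝ) + (i : ℝ) + 1)) (k + 1)) :=
          Finset.sum_congr rfl fun k _ => by push_cast; ring_nf
      _ = _ := Finset.sum_range_sub' _ n
      _ = 1 / ((i : ℝ) + 1) - 1 / ((n : ℝ) + (i : ℝ) + 1) := by push_cast; ring_nf
  simp only [hps]
  have h2 : Tendsto (fun n : ℕ => 1 / ((n : ℝ) + (i : ℝ) + 1)) atTop (nhds 0) := by
    have := tendsto_aux ((i : ℝ) + 1)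
    refine this.congr fun n => ?_
    ring_nf
  simpa using (tendsto_const_nhds (x := 1 / ((i : ℝ) + 1))).sub h2

lemma hasSum_harm (j : ℕ) :
    HasSum (fun k : ℕ => 1 / ((k : ℝ) + 1) - 1 / ((k : ℝ) + (j : ℝ) + 2))
      (∑ i ∈ range (j + 1), 1 / ((i : ℝ) + 1)) := by
  have hdecomp : ∀ k : ℕ, 1 / ((k : ℝ) + 1) - 1 / ((k : ℝ) + (j : ℝ) + 2)
      = ∑ i ∈ range (j + 1),
        (1 / ((k : ℝ) + (i : ℝ) + 1) - 1 / ((k : ℝ) + (i : ℝ) + 2)) := by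
    intro k
    calc 1 / ((k : ℝ) + 1) - 1 / ((k : ℝ) + (j : ℝ) + 2)
        = (fun i : ℕ => 1 / ((k : ℝ) + (i : ℝ) + 1)) 0
            - (fun i : ℕ => 1 / ((k : ℝ) + (i : ℝ) + 1)) (j + 1) := by
          push_cast; ring_nf
      _ = ∑ i ∈ range (j + 1), ((fun i : ℕ => 1 / ((k : ℝ) + (i : ℝ) + 1)) i
            - (fun i : ℕ => 1 / ((k : ℝ) + (i : ℝ) + 1)) (i + 1)) :=
          (Finset.sum_range_sub' (fun i : ℕ => 1 / ((k : ℝ) + (i : ℝ) + 1)) (j + 1)).symm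
      _ = _ := Finset.sum_congr rfl fun i _ => by push_cast; ring_nf
  have := hasSum_sum (s := range (j + 1))
    (f := fun (i : ℕ) (k : ℕ) => 1 / ((k : ℝ) + (i : ℝ) + 1) - 1 / ((k : ℝ) + (i : ℝ) + 2))
    (a := fun i => 1 / ((i : ℝ) + 1)) (fun i _ => tele i)
  exact this.congr_fun fun k => hdecomp k

def eZisa : ℕ × ℕ ≃ {p : ℕ × ℕ // 0 < p.1 ∧ p.1 < p.2} where
  toFun p := ⟨(p.1 + 1, p.1 + p.2 + 2), by omega⟩
  invFun q := (q.1.1 - 1, q.1.2 - q.1.1 - 1)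
  left_inv p := by
    obtain ⟨a, b⟩ := p
    simp only [Prod.mk.injEq]
    omega
  right_inv q := by
    obtain ⟨⟨a, b⟩, h⟩ := q
    apply Subtype.ext
    simp only [Prod.mk.injEq]
    omega

lemma tsum_W_eq_G : ∑' p, Wzisa p = ∑' p, Gzisa p := by
  have hι : Function.Injective (fun p : ℕ × ℕ => (p.1, p.1 + p.2 + 1)) := by
    rintro ⟨a, b⟩ ⟨c, d⟩ h
    simp only [Prod.mk.injEq] at h ⊢
    omega
  rw [← Function.Injective.tsum_eq hι (f := Wzisa) ?_]
  · refine tsum_congr fun p => ?_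
    unfold Wzisa Gzisa
    rw [if_pos (by omega)]
    push_cast
    ring_nf
  · intro x hx
    rcases x with ⟨a, b⟩
    simp only [Function.mem_support] at hx
    by_cases hab : a < b
    · refine ⟨(a, b - a - 1), ?_⟩
      dsimp only
      simp only [Prod.mk.injEq]
      exact ⟨trivial, by omega⟩
    · exact absurd (by simp [Wzisa, hab]) hx

lemma summable_G_swap : Summable (fun p : ℕ × ℕ => Gzisa (p.2, p.1)) :=
  summable_G.prod_symm

lemma summable_F_swap : Summable (fun p : ℕ × ℕ => Fzisa (p.2, p.1)) :=
  summable_F.prod_symm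

lemma summable_W_swap : Summable (fun p : ℕ × ℕ => Wzisa (p.2, p.1)) :=
  summable_W.prod_symm

lemma tsum_swap (f : ℕ × ℕ → ℝ) : ∑' b : ℕ × ℕ, f (b.2, b.1) = ∑' b, f b :=
  (Equiv.prodComm ℕ ℕ).tsum_eq f

lemma tsum_F_eq_two_G : ∑' p, Fzisa p = 2 * ∑' p, Gzisa p := by
  have h : ∀ p : ℕ × ℕ, Fzisa p = Gzisa p + Gzisa (p.2, p.1) := by
    rintro ⟨k, j⟩
    unfold Fzisa Gzisa
    dsimp only
    have h1 : ((k:ℝ) + 1) ≠ 0 := by positivity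
    have h2 : ((j:ℝ) + 1) ≠ 0 := by positivity
    have h3 : ((k:ℝ) + (j:ℝ) + 2) ≠ 0 := by positivity
    have h4 : ((j:ℝ) + (k:ℝ) + 2) ≠ 0 := by positivity
    field_simp
    ring
  rw [tsum_congr h, Summable.tsum_add summable_G summable_G_swap, tsum_swap Gzisa]
  ring

lemma inner_F (j : ℕ) :
    ∑' k : ℕ, Fzisa (k, j)
      = (1 / ((j:ℝ) + 1) ^ 2) * ∑ i ∈ Finset.range (j + 1), 1 / ((i:ℝ) + 1) := by
  have hcong : ∀ k : ℕ, Fzisa (k, j)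
      = (1 / ((j:ℝ) + 1) ^ 2) * (1 / ((k:ℝ) + 1) - 1 / ((k:ℝ) + (j:ℝ) + 2)) := by
    intro k
    unfold Fzisa
    dsimp only
    have h1 : ((k:ℝ) + 1) ≠ 0 := by positivity
    have h2 : ((j:ℝ) + 1) ≠ 0 := by positivity
    have h3 : ((k:ℝ) + (j:ℝ) + 2) ≠ 0 := by positivity
    field_simp
    ring
  rw [tsum_congr hcong, tsum_mul_left, (hasSum_harm j).tsum_eq]

lemma inner_W (j : ℕ) :
    ∑' i : ℕ, Wzisa (i, j) = ∑ i ∈ Finset.range j, 1 / (((i:ℝ) + 1) * ((j:ℝ) + 1) ^ 2) := by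
  rw [tsum_eq_sum (s := Finset.range j)
    (fun i hi => by simp only [Finset.mem_range] at hi; simp [Wzisa, hi])]
  exact Finset.sum_congr rfl fun i hi => by
    simp only [Finset.mem_range] at hi
    simp [Wzisa, hi]

lemma key (j : ℕ) :
    (1 / ((j:ℝ) + 1) ^ 2) * ∑ i ∈ Finset.range (j + 1), 1 / ((i:ℝ) + 1)
      = 1 / ((j:ℝ) + 1) ^ 3 + ∑' i : ℕ, Wzisa (i, j) := by
  rw [inner_W, Finset.mul_sum, Finset.sum_range_succ, add_comm]
  congr 1
  · rw [div_mul_div_comm, one_mul, ← pow_succ]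
  · exact Finset.sum_congr rfl fun i _ => by
      rw [div_mul_div_comm, one_mul, mul_comm]

lemma summable_Wcol : Summable (fun j : ℕ => ∑' i : ℕ, Wzisa (i, j)) :=
  summable_W_swap.prod

lemma summable_zeta3 : Summable (fun j : ℕ => 1 / ((j:ℝ) + 1) ^ 3) := by
  have h := (summable_nat_add_iff 1).mpr
    (Real.summable_one_div_nat_pow.mpr (by norm_num : 1 < 3))
  refine h.congr fun n => ?_
  push_cast
  ring_nf

lemma tsum_F_eq_zeta_add_W :
    ∑' p, Fzisa p = (∑' j : ℕ, 1 / ((j:ℝ) + 1) ^ 3) + ∑' p, Wzisa p := by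
  calc ∑' p, Fzisa p = ∑' q : ℕ × ℕ, Fzisa (q.2, q.1) :=
        (tsum_swap Fzisa).symm
    _ = ∑' (j : ℕ) (k : ℕ), Fzisa (k, j) := Summable.tsum_prod summable_F_swap
    _ = ∑' j : ℕ, (1 / ((j:ℝ) + 1) ^ 3 + ∑' i : ℕ, Wzisa (i, j)) :=
        tsum_congr fun j => by rw [inner_F, key]
    _ = (∑' j : ℕ, 1 / ((j:ℝ) + 1) ^ 3) + ∑' (j : ℕ) (i : ℕ), Wzisa (i, j) :=
        Summable.tsum_add summable_zeta3 summable_Wcol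
    _ = _ := by
        congr 1
        exact (Summable.tsum_prod summable_W_swap).symm.trans (tsum_swap Wzisa)

/-- The multiple zeta value `ζ(1,2) = ∑_{0 < k₁ < k₂} 1/(k₁ k₂²)` equals
`ζ(3) = ∑_{k ≥ 1} 1/k³`. -/
theorem zeta_one_two_eq_zeta_three :
    ∑' p : {p : ℕ × ℕ // 0 < p.1 ∧ p.1 < p.2},
        (1 : ℝ) / ((p.1.1 : ℝ) * (p.1.2 : ℝ) ^ 2) =
      ∑' k : ℕ, (1 : ℝ) / ((k : ℝ) + 1) ^ 3 := by
  have hL : ∑' p : {p : ℕ × ℕ // 0 < p.1 ∧ p.1 < p.2},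
      (1 : ℝ) / ((p.1.1 : ℝ) * (p.1.2 : ℝ) ^ 2) = ∑' p, Gzisa p := by
    rw [← eZisa.tsum_eq]
    refine tsum_congr ?_
    rintro ⟨k, j⟩
    unfold Gzisa
    simp only [eZisa, Equiv.coe_fn_mk]
    push_cast
    ring_nf
  rw [hL]
  have h1 := tsum_F_eq_two_G
  have h2 := tsum_F_eq_zeta_add_W
  have h3 := tsum_W_eq_G
  linarith
end

section
/- For the two-loop two-point graph G with U = (α₁+α₅)(α₂+α₄) + α₃(α₁+α₂+α₄+α₅) and V = α₃(α₁+α₂)(α₄+α₅) + α₂α₄α₅ + α₁α₄α₅ + α₁α₂α₅ + α₁α₂α₄, the integral I_G = ∫ over the region {α₅ = 1, α_i > 0 for i ∈ {1,2,3,4}} of 1/(U·V) dα₁dα₂dα₃dα₄ converges. -/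
/-!
The integrand is dominated by `∏ᵢ (αᵢ³ (αᵢ + 1)²)^(-1/4)`, a product of functions of one variable,
each integrable on `(0, ∞)` since it behaves like `t^(-3/4)` at `0` and like `t^(-5/4)` at `∞`.
The domination is the homogeneous inequality `∏_{i ≤ 4} αᵢ³ (αᵢ + α₅)² ≤ (U V)⁴`: the left side
splits into four factors bounded by `U`, such as `(α₁ + α₅) α₄`, and four bounded by `V`, such as
`α₁ α₂ (α₄ + α₅)`.
-/

open MeasureTheory Set

def symanzikU (a₁ a₂ a₃ a₄ a₅ : ℝ) : ℝ :=
  (a₁ + a₅) * (a₂ + a₄) + a₃ * (a₁ + a₂ + a₄ + a₅)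

def symanzikV (a₁ a₂ a₃ a₄ a₅ : ℝ) : ℝ :=
  a₃ * (a₁ + a₂) * (a₄ + a₅) + a₂ * a₄ * a₅ + a₁ * a₄ * a₅ + a₁ * a₂ * a₅ + a₁ * a₂ * a₄

section SymanzikBounds

variable {a₁ a₂ a₃ a₄ a₅ : ℝ}

lemma mul_le_symanzikU_pow_four (h₁ : 0 ≤ a₁) (h₂ : 0 ≤ a₂) (h₃ : 0 ≤ a₃) (h₄ : 0 ≤ a₄)
    (h₅ : 0 ≤ a₅) :
    (a₁ + a₅) ^ 2 * (a₂ + a₅) ^ 2 * a₃ ^ 3 * a₄ ≤ symanzikU a₁ a₂ a₃ a₄ a₅ ^ 4 := by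
  set U := symanzikU a₁ a₂ a₃ a₄ a₅
  have hU : 0 ≤ U := by unfold U symanzikU; positivity
  have h₁₄ : (a₁ + a₅) * a₄ ≤ U :=
    sub_nonneg.1 (by unfold U symanzikU; ring_nf; positivity)
  have h₁₃ : (a₁ + a₅) * a₃ ≤ U :=
    sub_nonneg.1 (by unfold U symanzikU; ring_nf; positivity)
  have h₂₃ : (a₂ + a₅) * a₃ ≤ U :=
    sub_nonneg.1 (by unfold U symanzikU; ring_nf; positivity)
  calc (a₁ + a₅) ^ 2 * (a₂ + a₅) ^ 2 * a₃ ^ 3 * a₄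
      = ((a₁ + a₅) * a₄) * ((a₁ + a₅) * a₃) * ((a₂ + a₅) * a₃) * ((a₂ + a₅) * a₃) := by ring
    _ ≤ U * U * U * U := by gcongr
    _ = U ^ 4 := by ring

lemma mul_le_symanzikV_pow_four (h₁ : 0 ≤ a₁) (h₂ : 0 ≤ a₂) (h₃ : 0 ≤ a₃) (h₄ : 0 ≤ a₄)
    (h₅ : 0 ≤ a₅) :
    a₁ ^ 3 * a₂ ^ 3 * a₄ ^ 2 * (a₃ + a₅) ^ 2 * (a₄ + a₅) ^ 2 ≤
      symanzikV a₁ a₂ a₃ a₄ a₅ ^ 4 := by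
  set V := symanzikV a₁ a₂ a₃ a₄ a₅
  have hV : 0 ≤ V := by unfold V symanzikV; positivity
  have h₁₄ : a₁ * a₄ * (a₃ + a₅) ≤ V :=
    sub_nonneg.1 (by unfold V symanzikV; ring_nf; positivity)
  have h₂₄ : a₂ * a₄ * (a₃ + a₅) ≤ V :=
    sub_nonneg.1 (by unfold V symanzikV; ring_nf; positivity)
  have h₁₂ : a₁ * a₂ * (a₄ + a₅) ≤ V :=
    sub_nonneg.1 (by unfold V symanzikV; ring_nf; positivity)
  calc a₁ ^ 3 * a₂ ^ 3 * a₄ ^ 2 * (a₃ + a₅) ^ 2 * (a₄ + a₅) ^ 2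
      = (a₁ * a₄ * (a₃ + a₅)) * (a₂ * a₄ * (a₃ + a₅)) * (a₁ * a₂ * (a₄ + a₅)) *
          (a₁ * a₂ * (a₄ + a₅)) := by ring
    _ ≤ V * V * V * V := by gcongr
    _ = V ^ 4 := by ring

lemma prod_le_symanzikU_mul_symanzikV_pow_four (h₁ : 0 ≤ a₁) (h₂ : 0 ≤ a₂) (h₃ : 0 ≤ a₃)
    (h₄ : 0 ≤ a₄) (h₅ : 0 ≤ a₅) :
    a₁ ^ 3 * (a₁ + a₅) ^ 2 * (a₂ ^ 3 * (a₂ + a₅) ^ 2 * (a₃ ^ 3 * (a₃ + a₅) ^ 2 *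
      (a₄ ^ 3 * (a₄ + a₅) ^ 2))) ≤
      (symanzikU a₁ a₂ a₃ a₄ a₅ * symanzikV a₁ a₂ a₃ a₄ a₅) ^ 4 := by
  rw [mul_pow]
  calc _ = ((a₁ + a₅) ^ 2 * (a₂ + a₅) ^ 2 * a₃ ^ 3 * a₄) *
        (a₁ ^ 3 * a₂ ^ 3 * a₄ ^ 2 * (a₃ + a₅) ^ 2 * (a₄ + a₅) ^ 2) := by ring
    _ ≤ _ := mul_le_mul (mul_le_symanzikU_pow_four h₁ h₂ h₃ h₄ h₅)
        (mul_le_symanzikV_pow_four h₁ h₂ h₃ h₄ h₅) (by positivity) (by positivity)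

end SymanzikBounds

lemma inv_le_rpow_neg_inv_of_le_pow {p q : ℝ} {n : ℕ} (hn : n ≠ 0) (hp : 0 < p) (hq : 0 ≤ q)
    (hpq : p ≤ q ^ n) : q⁻¹ ≤ p ^ (-(n : ℝ)⁻¹) :=
  calc q⁻¹ = (q ^ n) ^ (-(n : ℝ)⁻¹) := by
        rw [Real.rpow_neg (by positivity), Real.pow_rpow_inv_natCast hq hn]
    _ ≤ p ^ (-(n : ℝ)⁻¹) := Real.rpow_le_rpow_of_nonpos hp hpq (by simp)

lemma integrableOn_Ioi_zero_of_le_rpow {f : ℝ → ℝ} {a b : ℝ} (ha : -1 < a) (hb : b < -1)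
    (hf : ContinuousOn f (Ioi 0)) (h₀ : ∀ t ∈ Ioc (0 : ℝ) 1, ‖f t‖ ≤ t ^ a)
    (h₁ : ∀ t ∈ Ioi (1 : ℝ), ‖f t‖ ≤ t ^ b) : IntegrableOn f (Ioi 0) := by
  rw [← Ioc_union_Ioi_eq_Ioi zero_le_one]
  refine IntegrableOn.union ?_ ?_
  · have hrpow : IntegrableOn (fun t : ℝ ↦ t ^ a) (Ioc 0 1) :=
      (integrableOn_Ioc_iff_integrableOn_Ioo (by simp)).2
        ((intervalIntegral.integrableOn_Ioo_rpow_iff one_pos).2 ha)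
    exact hrpow.mono' ((hf.mono Ioc_subset_Ioi_self).aestronglyMeasurable measurableSet_Ioc)
      ((ae_restrict_iff' measurableSet_Ioc).2 (ae_of_all _ h₀))
  · exact (integrableOn_Ioi_rpow_of_lt hb one_pos).mono'
      ((hf.mono (Ioi_subset_Ioi zero_le_one)).aestronglyMeasurable measurableSet_Ioi)
      ((ae_restrict_iff' measurableSet_Ioi).2 (ae_of_all _ h₁))

theorem MeasureTheory.IntegrableOn.mul_prod {α β L : Type*} [MeasurableSpace α] [MeasurableSpace β]
    [NormedRing L] {μ : Measure α} {ν : Measure β} [SFinite μ] [SFinite ν] {f : α → L}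
    {g : β → L} {s : Set α} {t : Set β} (hf : IntegrableOn f s μ) (hg : IntegrableOn g t ν) :
    IntegrableOn (fun z : α × β ↦ f z.1 * g z.2) (s ×ˢ t) (μ.prod ν) := by
  rw [IntegrableOn, ← Measure.prod_restrict]
  exact Integrable.mul_prod hf hg

noncomputable def periodWeight (t : ℝ) : ℝ := (t ^ 3 * (t + 1) ^ 2) ^ (-(4 : ℝ)⁻¹)

lemma periodWeight_le_rpow {t : ℝ} (ht : 0 < t) {n : ℕ} (hn : t ^ n ≤ t ^ 3 * (t + 1) ^ 2) :
    ‖periodWeight t‖ ≤ t ^ (-(n / 4 : ℝ)) :=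
  calc ‖periodWeight t‖ = periodWeight t := Real.norm_of_nonneg (by unfold periodWeight; positivity)
    _ ≤ (t ^ n) ^ (-(4 : ℝ)⁻¹) := Real.rpow_le_rpow_of_nonpos (by positivity) hn (by norm_num)
    _ = t ^ (-(n / 4 : ℝ)) := by rw [← Real.rpow_natCast_mul ht.le]; ring_nf

lemma integrableOn_periodWeight : IntegrableOn periodWeight (Ioi 0) := by
  refine integrableOn_Ioi_zero_of_le_rpow (a := -(3 / 4 : ℝ)) (b := -(5 / 4 : ℝ)) (by norm_num)
    (by norm_num) ?_ (fun t ht ↦ ?_) (fun t ht ↦ ?_)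
  · exact ContinuousOn.rpow_const (by fun_prop) fun t ht ↦ Or.inl (by have := ht.out; positivity)
  · have ht₀ : 0 < t := ht.1
    simpa using periodWeight_le_rpow ht₀ (n := 3)
      (le_mul_of_one_le_right (by positivity) (one_le_pow₀ (by linarith)))
  · have ht₀ : 0 < t := zero_lt_one.trans ht
    simpa using periodWeight_le_rpow ht₀ (n := 5)
      (calc t ^ 5 = t ^ 3 * t ^ 2 := by ring
        _ ≤ t ^ 3 * (t + 1) ^ 2 := by gcongr; linarith)

lemma one_div_symanzik_le_periodWeight {x y z w : ℝ} (hx : 0 < x) (hy : 0 < y) (hz : 0 < z)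
    (hw : 0 < w) :
    1 / (symanzikU x y z w 1 * symanzikV x y z w 1) ≤
      periodWeight x * (periodWeight y * (periodWeight z * periodWeight w)) := by
  unfold periodWeight
  rw [one_div, ← Real.mul_rpow (by positivity) (by positivity),
    ← Real.mul_rpow (by positivity) (by positivity),
    ← Real.mul_rpow (by positivity) (by positivity)]
  have hUV : 0 ≤ symanzikU x y z w 1 * symanzikV x y z w 1 := by
    unfold symanzikU symanzikV; positivity
  simpa using inv_le_rpow_neg_inv_of_le_pow four_ne_zero (by positivity) hUV
    (prod_le_symanzikU_mul_symanzikV_pow_four hx.le hy.le hz.le hw.le zero_le_one)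

/-- Convergence of the two-loop two-point period integral
`∫_{(0,∞)⁴} dα₁dα₂dα₃dα₄ / (U·V)` with `α₅ = 1`, where `U, V` are the two
Symanzik polynomials of the two-loop two-point graph. -/
theorem two_loop_period_integrable :
    IntegrableOn
      (fun a : ℝ × ℝ × ℝ × ℝ =>
        1 / (((a.1 + 1) * (a.2.1 + a.2.2.2) + a.2.2.1 * (a.1 + a.2.1 + a.2.2.2 + 1)) *
          (a.2.2.1 * (a.1 + a.2.1) * (a.2.2.2 + 1) +
            a.2.1 * a.2.2.2 * 1 + a.1 * a.2.2.2 * 1 + a.1 * a.2.1 * 1 +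
            a.1 * a.2.1 * a.2.2.2)))
      (Set.Ioi 0 ×ˢ Set.Ioi 0 ×ˢ Set.Ioi 0 ×ˢ Set.Ioi 0) volume := by
  have hdom : IntegrableOn (fun a : ℝ × ℝ × ℝ × ℝ ↦ periodWeight a.1 *
      (periodWeight a.2.1 * (periodWeight a.2.2.1 * periodWeight a.2.2.2)))
      (Ioi 0 ×ˢ Ioi 0 ×ˢ Ioi 0 ×ˢ Ioi 0) volume :=
    .mul_prod integrableOn_periodWeight <| .mul_prod integrableOn_periodWeight <|
      .mul_prod integrableOn_periodWeight integrableOn_periodWeight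
  have hmeas : MeasurableSet (Ioi (0 : ℝ) ×ˢ Ioi (0 : ℝ) ×ˢ Ioi (0 : ℝ) ×ˢ Ioi (0 : ℝ)) :=
    measurableSet_Ioi.prod (measurableSet_Ioi.prod (measurableSet_Ioi.prod measurableSet_Ioi))
  refine hdom.mono' (by fun_prop : Measurable _).aestronglyMeasurable
    ((ae_restrict_iff' hmeas).2 (ae_of_all _ fun a ha ↦ ?_))
  obtain ⟨hx, hy, hz, hw⟩ : 0 < a.1 ∧ 0 < a.2.1 ∧ 0 < a.2.2.1 ∧ 0 < a.2.2.2 := ha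
  rw [Real.norm_of_nonneg (by positivity)]
  exact one_div_symanzik_le_periodWeight hx hy hz hw
end
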